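/- Extending the splitter to seeds is well-defined: if s is a seed (a binary tree of pairwise compatible identifier patterns), then applying the splitter to every leaf of s yields a tree whose identifier patterns are again pairwise compatible. -/
import Mathlib


/-- The stream of the identifier pattern `(c,s)`. -/
def stream (c s : ℕ) : Set ℕ := {x | ∃ n : ℕ, x = c + n * s}

/-- Compatibility of identifier patterns: disjointness of their streams. -/
def IPCompat (p q : ℕ × ℕ) : Prop := Disjoint (stream p.1 p.2) (stream q.1 q.2)

/-- Seeds: binary trees of identifier patterns. -/
inductive Seed where
  | ip : ℕ → ℕ → Seed
  | pair : Seed → Seed → Seed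

/-- The identifier patterns occurring in a seed. -/
def Seed.leaves : Seed → List (ℕ × ℕ)
  | .ip c s => [(c, s)]
  | .pair s₁ s₂ => s₁.leaves ++ s₂.leaves

/-- A seed is well-formed when its patterns are genuine identifier patterns
(positive step) and pairwise compatible. -/
def SeedWF (s : Seed) : Prop :=
  (∀ p ∈ s.leaves, 0 < p.2) ∧ s.leaves.Pairwise IPCompat

/-- Two seeds are compatible if all their identifier patterns are pairwise compatible. -/
def SeedCompat (s₁ s₂ : Seed) : Prop :=
  ∀ p ∈ s₁.leaves, ∀ q ∈ s₂.leaves, IPCompat p q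

/-- Applying the splitter `∩(c,s) = ((c,2s),(c+s,2s))` to every leaf of a seed. -/
def Seed.splitAll : Seed → Seed
  | .ip c s => .pair (.ip c (2 * s)) (.ip (c + s) (2 * s))
  | .pair s₁ s₂ => .pair s₁.splitAll s₂.splitAll

lemma stream_double_subset (c s d : ℕ) (hd : d = 0 ∨ d = s) :
    stream (c + d) (2 * s) ⊆ stream c s := by
  rintro x ⟨n, rfl⟩
  rcases hd with rfl | rfl
  · exact ⟨2 * n, by ring⟩
  · exact ⟨2 * n + 1, by ring⟩

lemma split_leaf_subset (t : Seed) :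
    ∀ q ∈ t.splitAll.leaves, ∃ p ∈ t.leaves, stream q.1 q.2 ⊆ stream p.1 p.2 := by
  induction t with
  | ip c s =>
    intro q hq
    simp only [Seed.splitAll, Seed.leaves, List.mem_append, List.mem_singleton] at hq
    refine ⟨(c, s), by simp [Seed.leaves], ?_⟩
    rcases hq with rfl | rfl
    · simpa using stream_double_subset c s 0 (Or.inl rfl)
    · exact stream_double_subset c s s (Or.inr rfl)
  | pair s₁ s₂ ih₁ ih₂ =>
    intro q hq
    simp only [Seed.splitAll, Seed.leaves, List.mem_append] at hq ⊢
    rcases hq with hq | hq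
    · obtain ⟨p, hp, hs⟩ := ih₁ q hq; exact ⟨p, Or.inl hp, hs⟩
    · obtain ⟨p, hp, hs⟩ := ih₂ q hq; exact ⟨p, Or.inr hp, hs⟩

lemma split_self_compat (c s : ℕ) (hs : 0 < s) :
    IPCompat (c, 2 * s) (c + s, 2 * s) := by
  rw [IPCompat, Set.disjoint_left]
  rintro x ⟨n, rfl⟩ ⟨m, hm⟩
  simp only at hm
  have key : s * (2 * n) = s * (2 * m + 1) := by
    have h1 : s * (2 * n) = n * (2 * s) := by ring
    have h2 : s * (2 * m + 1) = s + m * (2 * s) := by ring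
    omega
  have := Nat.eq_of_mul_eq_mul_left hs key
  omega

/-- Extending the splitter to seeds is well-defined: applying the splitter to every
leaf of a well-formed seed again yields pairwise compatible identifier patterns. -/
theorem splitAll_wf (s : Seed) (h : SeedWF s) : SeedWF s.splitAll := by
  induction s with
  | ip c s =>
    obtain ⟨hpos, _⟩ := h
    have hs : 0 < s := hpos (c, s) (by simp [Seed.leaves])
    constructor
    · intro p hp
      simp only [Seed.splitAll, Seed.leaves, List.mem_append, List.mem_singleton] at hp
      rcases hp with rfl | rfl <;> simp <;> omega
    · simp only [Seed.splitAll, Seed.leaves, List.singleton_append]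
      exact List.pairwise_cons.mpr ⟨by simpa using split_self_compat c s hs,
        List.pairwise_singleton _ _⟩
  | pair s₁ s₂ ih₁ ih₂ =>
    obtain ⟨hpos, hpw⟩ := h
    simp only [Seed.leaves, List.pairwise_append, List.mem_append] at hpos hpw
    obtain ⟨pw₁, pw₂, hcompat⟩ := hpw
    obtain ⟨w₁pos, w₁pw⟩ := ih₁ ⟨fun p hp => hpos p (Or.inl hp), pw₁⟩
    obtain ⟨w₂pos, w₂pw⟩ := ih₂ ⟨fun p hp => hpos p (Or.inr hp), pw₂⟩
    refine ⟨?_, ?_⟩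
    · intro p hp
      simp only [Seed.splitAll, Seed.leaves, List.mem_append] at hp
      rcases hp with hp | hp
      · exact w₁pos p hp
      · exact w₂pos p hp
    · simp only [Seed.splitAll, Seed.leaves, List.pairwise_append]
      refine ⟨w₁pw, w₂pw, ?_⟩
      intro a ha b hb
      obtain ⟨p, hp, hps⟩ := split_leaf_subset s₁ a ha
      obtain ⟨q, hq, hqs⟩ := split_leaf_subset s₂ b hb
      exact Set.disjoint_of_subset hps hqs (hcompat p hp q hq)
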